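/- Let (X,d) be a complete metric space and let S = (X,(φ_j)_{j=1}^L,(p_j)_{j=1}^L) be a GIFS with probabilities of order m in which each φ_j is an (a_0,...,a_{m−1})-contraction with α := Σ_{i=0}^{m−1} a_i < 1, and let μ_S be its Hutchinson measure (the unique compactly supported Borel probability measure with M_S(μ_S,...,μ_S) = μ_S). Let ε > 0, let X̂ be a proper ε-net of X, let r : X → X̂ be a Borel measurable ε-projection, and define the discretized diagonal Markov operator M̄_Ŝ(ν) := Σ_{j=1}^L p_j · (r∘φ_j)♯(ν × ... × ν) (pushforward of the m-fold product). Then for every Borel probability measure ν with compact support contained in X̂ and every n ∈ ℕ, d_MK(M̄_Ŝⁿ(ν), μ_S) ≤ ε/(1−α) + αⁿ · d_MK(ν, μ_S). In particular, for all sufficiently large n, d_MK(M̄_Ŝⁿ(ν), μ_S) ≤ 2ε/(1−α). -/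

import Mathlib

open MeasureTheory Filter

/-- The Monge–Kantorovich (Hutchinson) distance between two measures. -/
noncomputable def dMK {X : Type*} [MetricSpace X] [MeasurableSpace X]
    (μ ν : Measure X) : ℝ :=
  sSup {s : ℝ | ∃ f : X → ℝ, LipschitzWith 1 f ∧ s = |∫ x, f x ∂μ - ∫ x, f x ∂ν|}

/-- The topological support of a Borel measure. -/
def msupport {X : Type*} [TopologicalSpace X] [MeasurableSpace X]
    (μ : Measure X) : Set X :=
  {x | ∀ U : Set X, IsOpen U → x ∈ U → 0 < μ U}

/-!
For a 1-Lipschitz test function `f`, one step of the discretized operator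
`T ρ = ∑ⱼ pⱼ (r ∘ φⱼ)♯ ρ^m` is compared with the fixed point equation `μ_S = ∑ⱼ pⱼ φⱼ♯ μ_S^m`:
replacing `r ∘ φⱼ` by `φⱼ` costs at most `ε`, and since `f ∘ φⱼ` is `aᵢ`-Lipschitz in the `i`-th
coordinate, integrating out one coordinate at a time (Fubini) compares `ρ^m` with `μ_S^m` at
cost `α · d_MK(ρ, μ_S)`. Hence `d_MK(T ρ, μ_S) ≤ ε + α d_MK(ρ, μ_S)`, and iterating gives the bound.

Every measure involved has compact support: `μ_S` and `ν` by assumption, and the iterates because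
`r` maps the bounded sets `φⱼ(K^m)` into the proper net, hence onto finite sets. Compact support
keeps the set whose supremum defines `d_MK` bounded (the `sSup` of an unbounded set is `0`), and,
as `X` need not be separable, it is what makes continuous maps on `X^m` measurable for the
product σ-algebra: they are Borel on the second countable set `K^m`.
-/

open Set TopologicalSpace Metric Topology
open scoped NNReal

theorem Pi.opensMeasurableSpace_subtype {ι : Type*} [Countable ι] {X : ι → Type*}
    [∀ i, TopologicalSpace (X i)] [∀ i, MeasurableSpace (X i)] [∀ i, OpensMeasurableSpace (X i)]
    (Q : Set (∀ i, X i)) [SecondCountableTopology Q] : OpensMeasurableSpace Q := by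
  have hB := (isTopologicalBasis_pi fun i => isTopologicalBasis_opens (α := X i)).isInducing
    Topology.IsInducing.subtypeVal (f := ((↑) : Q → ∀ i, X i))
  constructor
  rw [borel_eq_generateFrom_of_subbasis hB.eq_generateFrom]
  refine MeasurableSpace.generateFrom_le ?_
  rintro _ ⟨_, ⟨u, I, hu, rfl⟩, rfl⟩
  exact measurable_subtype_coe
    (MeasurableSet.pi I.countable_toSet fun i hi => (hu i hi).measurableSet)

theorem Continuous.aemeasurable_of_ae_mem {α Y : Type*} [TopologicalSpace α] [MeasurableSpace α]
    [TopologicalSpace Y] [MeasurableSpace Y] [BorelSpace Y] {f : α → Y} (hf : Continuous f)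
    {μ : Measure α} {Q : Set α} (hQ : MeasurableSet Q) [OpensMeasurableSpace Q]
    (hμQ : ∀ᵐ x ∂μ, x ∈ Q) : AEMeasurable f μ := by
  rw [← Measure.restrict_eq_self_of_ae_mem hμQ, ← map_comap_subtype_coe hQ,
    (MeasurableEmbedding.subtype_coe hQ).aemeasurable_map_iff]
  exact (hf.comp continuous_subtype_val).measurable.aemeasurable

theorem MeasureTheory.Measure.ae_mem_univ_pi {ι X : Type*} [Fintype ι] [MeasurableSpace X]
    {μ : ι → Measure X} [∀ i, SigmaFinite (μ i)] {K : ι → Set X}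
    (h : ∀ i, ∀ᵐ x ∂μ i, x ∈ K i) : ∀ᵐ x ∂Measure.pi μ, x ∈ univ.pi K := by
  simp only [mem_univ_pi]
  exact ae_all_iff.2 fun i => Measure.tendsto_eval_ae_ae.eventually (h i)

theorem Continuous.integrable_of_ae_mem_isCompact {α E : Type*} [TopologicalSpace α]
    [MeasurableSpace α] [NormedAddCommGroup E] {μ : Measure α} [IsFiniteMeasure μ] {f : α → E}
    (hf : Continuous f) (hfm : AEStronglyMeasurable f μ) {K : Set α} (hK : IsCompact K)
    (hμK : ∀ᵐ x ∂μ, x ∈ K) : Integrable f μ :=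
  have ⟨C, hC⟩ := hK.exists_bound_of_continuousOn hf.continuousOn
  .of_bound hfm C (hμK.mono hC)

section RealIntegral
variable {α : Type*} [MeasurableSpace α] {μ : Measure α} {F G : α → ℝ} {C : ℝ}

theorem integrable_of_ae_dist_le [IsFiniteMeasure μ] (hF : AEStronglyMeasurable F μ)
    (hG : Integrable G μ) (h : ∀ᵐ x ∂μ, dist (F x) (G x) ≤ C) : Integrable F μ :=
  integrable_of_norm_sub_le hF hG (integrable_const C) <| h.mono fun x hx => by
    rwa [← dist_eq_norm, dist_comm]

theorem abs_integral_sub_le_of_ae_dist_le [IsProbabilityMeasure μ] (hF : Integrable F μ)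
    (hG : Integrable G μ) (h : ∀ᵐ x ∂μ, dist (F x) (G x) ≤ C) :
    |∫ x, F x ∂μ - ∫ x, G x ∂μ| ≤ C := by
  rw [← integral_sub hF hG]
  simpa using norm_integral_le_of_norm_le_const (f := fun x => F x - G x)
    (h.mono fun x hx => by rwa [← dist_eq_norm])

theorem lipschitzWith_integral_of_dist_le {Y : Type*} [PseudoMetricSpace Y]
    [IsProbabilityMeasure μ] {F : Y → α → ℝ} (hF : ∀ y, Integrable (F y) μ)
    (h : ∀ y y' x, dist (F y x) (F y' x) ≤ C * dist y y') :
    LipschitzWith C.toNNReal fun y => ∫ x, F y x ∂μ :=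
  .of_dist_le' fun y y' => abs_integral_sub_le_of_ae_dist_le (hF y) (hF y') (ae_of_all _ (h y y'))

end RealIntegral

theorem lipschitzWith_of_dist_le_sum_mul {ι X Y : Type*} [Fintype ι] [PseudoMetricSpace X]
    [PseudoMetricSpace Y] {g : (ι → X) → Y} {b : ι → ℝ} (hb : ∀ i, 0 ≤ b i)
    (hg : ∀ x y, dist (g x) (g y) ≤ ∑ i, b i * dist (x i) (y i)) :
    LipschitzWith (∑ i, b i).toNNReal g :=
  .of_dist_le' fun x y => (hg x y).trans <| by
    rw [Finset.sum_mul]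
    exact Finset.sum_le_sum fun i _ => mul_le_mul_of_nonneg_left (dist_le_pi_dist x y i) (hb i)

theorem integral_pi_fin_succ {X : Type*} [MeasurableSpace X] {k : ℕ}
    {μ : Fin (k + 1) → Measure X} [∀ i, SigmaFinite (μ i)] {g : (Fin (k + 1) → X) → ℝ}
    (hg : Integrable g (Measure.pi μ)) :
    ∫ z, g z ∂Measure.pi μ =
      ∫ x, ∫ y, g (Fin.cons x y) ∂Measure.pi (fun i => μ i.succ) ∂μ 0 := by
  have e := (measurePreserving_piFinSuccAbove (fun i => μ i) 0).symm
  have hg' := (e.integrable_comp_emb (MeasurableEquiv.measurableEmbedding _)).2 hg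
  rw [← e.integral_comp']
  refine (integral_prod _ hg').trans ?_
  simp [MeasurableEquiv.piFinSuccAbove_symm_apply, Fin.insertNthEquiv]

theorem dMK_le_of_forall {X : Type*} [MetricSpace X] [MeasurableSpace X] {μ ν : Measure X}
    {c : ℝ} (h : ∀ f : X → ℝ, LipschitzWith 1 f → |∫ x, f x ∂μ - ∫ x, f x ∂ν| ≤ c) :
    dMK μ ν ≤ c :=
  csSup_le ⟨0, fun _ => 0, .const' 0, by simp⟩ fun _ ⟨f, hf, hs⟩ => hs ▸ h f hf

section CompactSupport
variable {X : Type*} [MetricSpace X] [MeasurableSpace X] [BorelSpace X]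

theorem Continuous.aemeasurable_pi_of_isCompact {ι Y : Type*} [Fintype ι] [TopologicalSpace Y]
    [MeasurableSpace Y] [BorelSpace Y] {μ : ι → Measure X} [∀ i, SigmaFinite (μ i)] {K : Set X}
    (hK : IsCompact K) (hμK : ∀ i, ∀ᵐ x ∂μ i, x ∈ K) {f : (ι → X) → Y} (hf : Continuous f) :
    AEMeasurable f (Measure.pi μ) := by
  have : SecondCountableTopology (univ.pi fun _ : ι => K) := by
    have := (isCompact_univ_pi fun _ : ι => hK).isSeparable.separableSpace
    infer_instance
  have := Pi.opensMeasurableSpace_subtype (univ.pi fun _ : ι => K)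
  exact hf.aemeasurable_of_ae_mem (.univ_pi fun _ => hK.measurableSet)
    (Measure.ae_mem_univ_pi hμK)

theorem Continuous.integrable_pi_of_isCompact {ι : Type*} [Fintype ι]
    {μ : ι → Measure X} [∀ i, IsFiniteMeasure (μ i)] {K : Set X}
    (hK : IsCompact K) (hμK : ∀ i, ∀ᵐ x ∂μ i, x ∈ K) {f : (ι → X) → ℝ} (hf : Continuous f) :
    Integrable f (Measure.pi μ) :=
  hf.integrable_of_ae_mem_isCompact (hf.aemeasurable_pi_of_isCompact hK hμK).aestronglyMeasurable
    (isCompact_univ_pi fun _ => hK) (Measure.ae_mem_univ_pi hμK)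

theorem abs_integral_sub_le_of_ae_mem_closedBall {μ : Measure X} [IsProbabilityMeasure μ]
    {f : X → ℝ} (hf : LipschitzWith 1 f) {x₀ : X} {C : ℝ} (hμ : ∀ᵐ x ∂μ, x ∈ closedBall x₀ C) :
    |∫ x, f x ∂μ - f x₀| ≤ C := by
  have hdist : ∀ᵐ x ∂μ, dist (f x) (f x₀) ≤ C :=
    hμ.mono fun x hx => (hf.dist_le_mul x x₀).trans (by simpa using hx)
  have hfi := integrable_of_ae_dist_le hf.continuous.aestronglyMeasurable (integrable_const _) hdist
  simpa using abs_integral_sub_le_of_ae_dist_le hfi (integrable_const _) hdist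

section FinCons
variable {ρ : Measure X} [IsProbabilityMeasure ρ] {K : Set X} (hK : IsCompact K)
  (hρ : ∀ᵐ x ∂ρ, x ∈ K) {k : ℕ} {b : Fin (k + 1) → ℝ} (hb : ∀ i, 0 ≤ b i)
  {g : (Fin (k + 1) → X) → ℝ} (hg : ∀ x y, dist (g x) (g y) ≤ ∑ i, b i * dist (x i) (y i))
include hK hρ hb hg

theorem integral_pi_fin_cons :
    ∫ z, g z ∂Measure.pi (fun _ => ρ) = ∫ x, ∫ y, g (Fin.cons x y) ∂Measure.pi (fun _ => ρ) ∂ρ :=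
  integral_pi_fin_succ <|
    (lipschitzWith_of_dist_le_sum_mul hb hg).continuous.integrable_pi_of_isCompact hK fun _ => hρ

theorem lipschitzWith_integral_fin_cons :
    LipschitzWith (b 0).toNNReal fun x => ∫ y, g (Fin.cons x y) ∂Measure.pi fun _ => ρ := by
  refine lipschitzWith_integral_of_dist_le (fun x => ?_) fun x x' y => ?_
  · refine (lipschitzWith_of_dist_le_sum_mul (fun i : Fin k => hb i.succ) fun y y' => ?_)
      |>.continuous.integrable_pi_of_isCompact hK fun _ => hρ
    simpa [Fin.sum_univ_succ] using hg (Fin.cons x y) (Fin.cons x y')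
  · simpa [Fin.sum_univ_succ] using hg (Fin.cons x y) (Fin.cons x' y)

end FinCons

section TwoMeasures
variable {μ ν : Measure X} [IsProbabilityMeasure μ] [IsProbabilityMeasure ν] {Kμ Kν : Set X}
  (hKμ : IsCompact Kμ) (hμ : ∀ᵐ x ∂μ, x ∈ Kμ) (hKν : IsCompact Kν) (hν : ∀ᵐ x ∂ν, x ∈ Kν)
include hKμ hμ hKν hν

theorem abs_integral_sub_le_dMK {f : X → ℝ} (hf : LipschitzWith 1 f) :
    |∫ x, f x ∂μ - ∫ x, f x ∂ν| ≤ dMK μ ν := by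
  refine le_csSup ?_ ⟨f, hf, rfl⟩
  obtain ⟨x₀⟩ := nonempty_of_isProbabilityMeasure μ
  obtain ⟨C, hC⟩ := (hKμ.union hKν).isBounded.subset_closedBall x₀
  refine ⟨C + C, ?_⟩
  rintro _ ⟨g, hg, rfl⟩
  calc |∫ x, g x ∂μ - ∫ x, g x ∂ν| ≤ |∫ x, g x ∂μ - g x₀| + |g x₀ - ∫ x, g x ∂ν| :=
        abs_sub_le _ _ _
    _ ≤ C + C := by
        rw [abs_sub_comm (g x₀)]
        exact add_le_add
          (abs_integral_sub_le_of_ae_mem_closedBall hg (hμ.mono fun x hx => hC (.inl hx)))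
          (abs_integral_sub_le_of_ae_mem_closedBall hg (hν.mono fun x hx => hC (.inr hx)))

theorem abs_integral_sub_le_mul_dMK {c : ℝ≥0} {G : X → ℝ} (hG : LipschitzWith c G) :
    |∫ x, G x ∂μ - ∫ x, G x ∂ν| ≤ c * dMK μ ν := by
  rcases eq_zero_or_pos c with rfl | hc
  · obtain ⟨x₀⟩ := nonempty_of_isProbabilityMeasure μ
    have hGc : G = fun _ => G x₀ := funext fun x => by simpa using hG.dist_le_mul x x₀
    rw [hGc]
    simp
  · have hc' : (0 : ℝ) < c := hc
    have hf : LipschitzWith 1 fun x => (c : ℝ)⁻¹ * G x := .of_dist_le_mul fun x y => by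
      rw [Real.dist_eq, ← mul_sub, abs_mul, ← Real.dist_eq, abs_inv, NNReal.abs_eq,
        NNReal.coe_one, one_mul, inv_mul_le_iff₀ hc']
      exact hG.dist_le_mul x y
    have := abs_integral_sub_le_dMK hKμ hμ hKν hν hf
    rwa [integral_const_mul, integral_const_mul, ← mul_sub, abs_mul, abs_inv, NNReal.abs_eq,
      inv_mul_le_iff₀ hc'] at this

theorem abs_integral_pi_sub_le_mul_dMK :
    ∀ {k : ℕ} {b : Fin k → ℝ}, (∀ i, 0 ≤ b i) → ∀ {g : (Fin k → X) → ℝ},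
      (∀ x y, dist (g x) (g y) ≤ ∑ i, b i * dist (x i) (y i)) →
      |∫ x, g x ∂Measure.pi (fun _ => μ) - ∫ x, g x ∂Measure.pi (fun _ => ν)|
        ≤ (∑ i, b i) * dMK μ ν
  | 0, _, _, g, _ => by
    rw [show g = fun _ => g default from funext fun x => congrArg g (Subsingleton.elim _ _)]
    simp
  | k + 1, b, hb, g, hg => by
    let H (ρ : Measure X) (x : X) : ℝ := ∫ y, g (Fin.cons x y) ∂Measure.pi fun _ => ρ
    have hH_lip := lipschitzWith_integral_fin_cons hKν hν hb hg
    have hH_int (ρ : Measure X) [IsProbabilityMeasure ρ] (K : Set X) (hK : IsCompact K)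
        (hρ : ∀ᵐ x ∂ρ, x ∈ K) : Integrable (H ρ) μ :=
      have hc := (lipschitzWith_integral_fin_cons hK hρ hb hg).continuous
      hc.integrable_of_ae_mem_isCompact hc.aestronglyMeasurable hKμ hμ
    rw [integral_pi_fin_cons hKμ hμ hb hg, integral_pi_fin_cons hKν hν hb hg]
    calc |∫ x, H μ x ∂μ - ∫ x, H ν x ∂ν|
        ≤ |∫ x, H μ x ∂μ - ∫ x, H ν x ∂μ| + |∫ x, H ν x ∂μ - ∫ x, H ν x ∂ν| := abs_sub_le _ _ _
      _ ≤ (∑ i : Fin k, b i.succ) * dMK μ ν + b 0 * dMK μ ν := by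
        refine add_le_add (abs_integral_sub_le_of_ae_dist_le (hH_int μ Kμ hKμ hμ)
          (hH_int ν Kν hKν hν) (ae_of_all _ fun x => ?_)) ?_
        · exact abs_integral_pi_sub_le_mul_dMK (fun i => hb i.succ) fun y y' => by
            simpa [Fin.sum_univ_succ] using hg (Fin.cons x y) (Fin.cons x y')
        · simpa [hb 0] using abs_integral_sub_le_mul_dMK hKμ hμ hKν hν hH_lip
      _ = (∑ i, b i) * dMK μ ν := by rw [Fin.sum_univ_succ]; ring

end TwoMeasures

end CompactSupport

section DiagonalMarkov
variable {X ι : Type*} [MeasurableSpace X] [Fintype ι] {m : ℕ}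

/-- The paper's `M_S(ρ, …, ρ)` for `ψ = φ`, and its discretization `M̄_Ŝ ρ` for
`ψⱼ = r ∘ φⱼ`. -/
noncomputable def diagonalMarkov (p : ι → ℝ≥0) (ψ : ι → (Fin m → X) → X) (ρ : Measure X) :
    Measure X :=
  ∑ j, p j • (Measure.pi fun _ : Fin m => ρ).map (ψ j)

variable {p : ι → ℝ≥0} {ψ : ι → (Fin m → X) → X} {ρ : Measure X}

theorem isProbabilityMeasure_diagonalMarkov [IsProbabilityMeasure ρ] (hp : ∑ j, p j = 1)
    (hψ : ∀ j, AEMeasurable (ψ j) (Measure.pi fun _ => ρ)) :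
    IsProbabilityMeasure (diagonalMarkov p ψ ρ) := by
  have := fun j => Measure.isProbabilityMeasure_map (hψ j)
  constructor
  simp [diagonalMarkov, Measure.coe_finsetSum, ← ENNReal.ofNNReal_finsetSum, hp]

theorem ae_mem_diagonalMarkov [SigmaFinite ρ]
    (hψ : ∀ j, AEMeasurable (ψ j) (Measure.pi fun _ => ρ)) {K : Set X} (hK : MeasurableSet K)
    (hψK : ∀ j, ∀ᵐ x ∂Measure.pi (fun _ => ρ), ψ j x ∈ K) :
    ∀ᵐ y ∂diagonalMarkov p ψ ρ, y ∈ K := by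
  simp only [ae_iff, diagonalMarkov, Measure.coe_finsetSum, Finset.sum_apply]
  refine Finset.sum_eq_zero fun j _ => ?_
  rw [Measure.smul_apply, ← compl_def, Measure.map_apply_of_aemeasurable (hψ j) hK.compl]
  exact smul_eq_zero_of_right _ (ae_iff.1 (hψK j))

theorem integral_diagonalMarkov [SigmaFinite ρ]
    (hψ : ∀ j, AEMeasurable (ψ j) (Measure.pi fun _ => ρ)) {f : X → ℝ} (hf : Measurable f)
    (hfψ : ∀ j, Integrable (fun x => f (ψ j x)) (Measure.pi fun _ => ρ)) :
    ∫ y, f y ∂diagonalMarkov p ψ ρ = ∑ j, (p j : ℝ) * ∫ x, f (ψ j x) ∂Measure.pi fun _ => ρ := by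
  rw [diagonalMarkov, integral_finsetSum_measure]
  · refine Finset.sum_congr rfl fun j _ => ?_
    rw [integral_smul_nnreal_measure, integral_map (hψ j) hf.aestronglyMeasurable,
      NNReal.smul_def, smul_eq_mul]
  · exact fun j _ => ((integrable_map_measure hf.aestronglyMeasurable (hψ j)).2 (hfψ j))
      |>.smul_measure ENNReal.coe_ne_top

end DiagonalMarkov

section Contraction
variable {X : Type*} [MetricSpace X] [MeasurableSpace X] [BorelSpace X] {m : ℕ}
  {ρ μ : Measure X} [IsProbabilityMeasure ρ] [IsProbabilityMeasure μ] {Kρ Kμ : Set X}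
  (hKρ : IsCompact Kρ) (hρ : ∀ᵐ x ∂ρ, x ∈ Kρ)
  {φ ψ : (Fin m → X) → X} {ε : ℝ} (hψφ : ∀ x, dist (ψ x) (φ x) ≤ ε)
  (hψ : AEMeasurable ψ (Measure.pi fun _ => ρ)) {f : X → ℝ} (hf : LipschitzWith 1 f)
include hKρ hρ hψφ hψ hf

theorem integrable_pi_comp_of_dist_le (hφ : Continuous φ) :
    Integrable (fun x => f (ψ x)) (Measure.pi fun _ => ρ) :=
  integrable_of_ae_dist_le (hf.continuous.measurable.comp_aemeasurable hψ).aestronglyMeasurable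
    ((hf.continuous.comp hφ).integrable_pi_of_isCompact hKρ fun _ => hρ)
    (ae_of_all _ fun x => (hf.dist_le_mul _ _).trans (by simpa using hψφ x))

theorem abs_integral_pi_comp_sub_le (hKμ : IsCompact Kμ) (hμ : ∀ᵐ x ∂μ, x ∈ Kμ)
    {a : Fin m → ℝ} (ha : ∀ i, 0 ≤ a i)
    (hφ : ∀ x y, dist (φ x) (φ y) ≤ ∑ i, a i * dist (x i) (y i)) :
    |∫ x, f (ψ x) ∂Measure.pi (fun _ => ρ) - ∫ x, f (φ x) ∂Measure.pi fun _ => μ|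
      ≤ ε + (∑ i, a i) * dMK ρ μ := by
  have hφc := (lipschitzWith_of_dist_le_sum_mul ha hφ).continuous
  calc _ ≤ |∫ x, f (ψ x) ∂Measure.pi (fun _ => ρ) - ∫ x, f (φ x) ∂Measure.pi fun _ => ρ|
        + |∫ x, f (φ x) ∂Measure.pi (fun _ => ρ) - ∫ x, f (φ x) ∂Measure.pi fun _ => μ| :=
        abs_sub_le _ _ _
    _ ≤ ε + (∑ i, a i) * dMK ρ μ := add_le_add
        (abs_integral_sub_le_of_ae_dist_le (integrable_pi_comp_of_dist_le hKρ hρ hψφ hψ hf hφc)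
          ((hf.continuous.comp hφc).integrable_pi_of_isCompact hKρ fun _ => hρ)
          (ae_of_all _ fun x => (hf.dist_le_mul _ _).trans (by simpa using hψφ x)))
        (abs_integral_pi_sub_le_mul_dMK hKρ hρ hKμ hμ ha fun x y =>
          (hf.dist_le_mul _ _).trans (by simpa using hφ x y))

end Contraction

theorem dMK_diagonalMarkov_le {X ι : Type*} [MetricSpace X] [MeasurableSpace X] [BorelSpace X]
    [Fintype ι] {m : ℕ} {p : ι → ℝ≥0} (hp : ∑ j, p j = 1) {φ ψ : ι → (Fin m → X) → X}
    {a : Fin m → ℝ} (ha : ∀ i, 0 ≤ a i)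
    (hφ : ∀ j x y, dist (φ j x) (φ j y) ≤ ∑ i, a i * dist (x i) (y i))
    {ε : ℝ} (hψφ : ∀ j x, dist (ψ j x) (φ j x) ≤ ε)
    {ρ μ : Measure X} [IsProbabilityMeasure ρ] [IsProbabilityMeasure μ] {Kρ Kμ : Set X}
    (hKρ : IsCompact Kρ) (hρ : ∀ᵐ x ∂ρ, x ∈ Kρ) (hKμ : IsCompact Kμ) (hμ : ∀ᵐ x ∂μ, x ∈ Kμ)
    (hψ : ∀ j, AEMeasurable (ψ j) (Measure.pi fun _ => ρ)) :
    dMK (diagonalMarkov p ψ ρ) (diagonalMarkov p φ μ) ≤ ε + (∑ i, a i) * dMK ρ μ := by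
  have hφc j : Continuous (φ j) := (lipschitzWith_of_dist_le_sum_mul ha (hφ j)).continuous
  refine dMK_le_of_forall fun f hf => ?_
  rw [integral_diagonalMarkov hψ hf.continuous.measurable
      fun j => integrable_pi_comp_of_dist_le hKρ hρ (hψφ j) (hψ j) hf (hφc j),
    integral_diagonalMarkov (fun j => (hφc j).aemeasurable_pi_of_isCompact hKμ fun _ => hμ)
      hf.continuous.measurable
      fun j => (hf.continuous.comp (hφc j)).integrable_pi_of_isCompact hKμ fun _ => hμ,
    ← Finset.sum_sub_distrib]
  calc _ ≤ ∑ j, (p j : ℝ) * |∫ x, f (ψ j x) ∂Measure.pi (fun _ => ρ)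
          - ∫ x, f (φ j x) ∂Measure.pi fun _ => μ| := by
        refine (Finset.abs_sum_le_sum_abs _ _).trans_eq (Finset.sum_congr rfl fun j _ => ?_)
        rw [← mul_sub, abs_mul, NNReal.abs_eq]
    _ ≤ ∑ j, (p j : ℝ) * (ε + (∑ i, a i) * dMK ρ μ) := by
        gcongr with j
        exact abs_integral_pi_comp_sub_le hKρ hρ (hψφ j) (hψ j) hf hKμ hμ ha (hφ j)
    _ = ε + (∑ i, a i) * dMK ρ μ := by
        rw [← Finset.sum_mul, ← NNReal.coe_sum, hp, NNReal.coe_one, one_mul]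

section Discretization
variable {X : Type*} [MetricSpace X]

theorem finite_image_of_isBounded {Xhat : Set X}
    (hproper : ∀ D : Set X, Bornology.IsBounded D → (D ∩ Xhat).Finite) {r : X → X}
    (hr_range : ∀ x, r x ∈ Xhat) {ε : ℝ} (hr_close : ∀ x, dist x (r x) ≤ ε) {D : Set X}
    (hD : Bornology.IsBounded D) : (r '' D).Finite :=
  (hproper _ hD.cthickening).subset <| by
    rintro _ ⟨x, hx, rfl⟩
    exact ⟨mem_cthickening_of_dist_le _ x ε D hx (by rw [dist_comm]; exact hr_close x), hr_range x⟩

variable [MeasurableSpace X] [BorelSpace X] {ι : Type*} [Fintype ι] {m : ℕ}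

theorem exists_finite_ae_mem_diagonalMarkov_comp (p : ι → ℝ≥0) {φ : ι → (Fin m → X) → X}
    (hφ : ∀ j, Continuous (φ j)) {r : X → X}
    (hr : ∀ D : Set X, Bornology.IsBounded D → (r '' D).Finite) (hrm : Measurable r)
    {ρ : Measure X} [SigmaFinite ρ] {K : Set X} (hK : IsCompact K) (hρ : ∀ᵐ x ∂ρ, x ∈ K) :
    ∃ K' : Set X, K'.Finite ∧ ∀ᵐ y ∂diagonalMarkov p (fun j => r ∘ φ j) ρ, y ∈ K' := by
  have hQ := isCompact_univ_pi fun _ : Fin m => hK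
  have hfin := hr _ (isCompact_iUnion fun j => hQ.image (hφ j)).isBounded
  refine ⟨_, hfin, ae_mem_diagonalMarkov (fun j => hrm.comp_aemeasurable
    ((hφ j).aemeasurable_pi_of_isCompact hK fun _ => hρ)) hfin.measurableSet fun j => ?_⟩
  filter_upwards [Measure.ae_mem_univ_pi fun _ => hρ] with x hx
  exact mem_image_of_mem r (mem_iUnion.2 ⟨j, mem_image_of_mem _ hx⟩)

end Discretization

theorem le_div_one_sub_add_pow_mul {d : ℕ → ℝ} {α ε : ℝ} (hα : 0 ≤ α) (hα1 : α < 1)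
    (hε : 0 ≤ ε) (h : ∀ n, d (n + 1) ≤ ε + α * d n) (n : ℕ) :
    d n ≤ ε / (1 - α) + α ^ n * d 0 := by
  have hα1' : 0 < 1 - α := sub_pos.2 hα1
  induction n with
  | zero => simpa using div_nonneg hε hα1'.le
  | succ n ih =>
    calc d (n + 1) ≤ ε + α * (ε / (1 - α) + α ^ n * d 0) := (h n).trans (by gcongr)
      _ = ε / (1 - α) + α ^ (n + 1) * d 0 := by field_simp; ring

theorem eventually_le_two_mul_div_one_sub {d : ℕ → ℝ} {α ε : ℝ} (hα : 0 ≤ α) (hα1 : α < 1)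
    (hε : 0 < ε) (h : ∀ n, d (n + 1) ≤ ε + α * d n) :
    ∀ᶠ n in atTop, d n ≤ 2 * ε / (1 - α) := by
  have hlim : Tendsto (fun n => α ^ n * d 0) atTop (𝓝 0) := by
    simpa using (tendsto_pow_atTop_nhds_zero_of_lt_one hα hα1).mul_const (d 0)
  filter_upwards [hlim.eventually (eventually_le_nhds (div_pos hε (sub_pos.2 hα1)))] with n hn
  have h2 : 2 * ε / (1 - α) = ε / (1 - α) + ε / (1 - α) := by ring
  linarith [le_div_one_sub_add_pow_mul hα hα1 hε.le h n]

theorem stmt19_general {X : Type*} [MetricSpace X]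
    [MeasurableSpace X] [BorelSpace X]
    {m L : ℕ}
    (φ : Fin L → (Fin m → X) → X)
    (a : Fin m → ℝ) (ha : ∀ i, 0 ≤ a i) (ha1 : ∑ i, a i < 1)
    (hφ : ∀ j, ∀ x y : Fin m → X,
      dist (φ j x) (φ j y) ≤ ∑ i, a i * dist (x i) (y i))
    (p : Fin L → NNReal) (hp1 : ∑ j, p j = 1)
    (μS : Measure X) [IsProbabilityMeasure μS]
    (hμSc : ∃ K : Set X, IsCompact K ∧ μS Kᶜ = 0)
    (hμSfix : (∑ j, p j • (Measure.pi fun _ : Fin m => μS).map (φ j)) = μS)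
    (ε : ℝ) (hε : 0 < ε) (Xhat : Set X)
    (hproper : ∀ D : Set X, Bornology.IsBounded D → (D ∩ Xhat).Finite)
    (r : X → X) (hrm : Measurable r)
    (hr_range : ∀ x, r x ∈ Xhat)
    (hr_close : ∀ x, dist x (r x) ≤ ε)
    (ν : Measure X) [IsProbabilityMeasure ν]
    (hνc : ∃ K : Set X, IsCompact K ∧ ν Kᶜ = 0) :
    (∀ n : ℕ,
      dMK ((fun ρ : Measure X =>
          ∑ j, p j • (Measure.pi fun _ : Fin m => ρ).map (r ∘ φ j))^[n] ν) μS
        ≤ ε / (1 - ∑ i, a i) + (∑ i, a i) ^ n * dMK ν μS) ∧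
    ∀ᶠ n in atTop,
      dMK ((fun ρ : Measure X =>
          ∑ j, p j • (Measure.pi fun _ : Fin m => ρ).map (r ∘ φ j))^[n] ν) μS
        ≤ 2 * ε / (1 - ∑ i, a i) := by
  obtain ⟨KS, hKS, hμS⟩ := hμSc
  have hα : 0 ≤ ∑ i, a i := Finset.sum_nonneg fun i _ => ha i
  have hφc j : Continuous (φ j) := (lipschitzWith_of_dist_le_sum_mul ha (hφ j)).continuous
  let T := diagonalMarkov p fun j => r ∘ φ j
  have hsupp n : IsProbabilityMeasure (T^[n] ν) ∧ ∃ K, IsCompact K ∧ ∀ᵐ x ∂T^[n] ν, x ∈ K := by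
    induction n with
    | zero => exact ⟨‹_›, hνc.imp fun K hK => ⟨hK.1, ae_iff.2 hK.2⟩⟩
    | succ n ih =>
      obtain ⟨_, K, hK, hKn⟩ := ih
      obtain ⟨K', hK'fin, hK'⟩ := exists_finite_ae_mem_diagonalMarkov_comp p hφc
        (fun D hD => finite_image_of_isBounded hproper hr_range hr_close hD) hrm hK hKn
      rw [Function.iterate_succ_apply']
      exact ⟨isProbabilityMeasure_diagonalMarkov hp1 fun j => hrm.comp_aemeasurable
        ((hφc j).aemeasurable_pi_of_isCompact hK fun _ => hKn), K', hK'fin.isCompact, hK'⟩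
  have hstep n : dMK (T^[n + 1] ν) μS ≤ ε + (∑ i, a i) * dMK (T^[n] ν) μS := by
    obtain ⟨_, K, hK, hKn⟩ := hsupp n
    have := dMK_diagonalMarkov_le hp1 ha hφ (fun j x => (dist_comm _ _).trans_le (hr_close _))
      hK hKn hKS (ae_iff.2 hμS) fun j => hrm.comp_aemeasurable
        ((hφc j).aemeasurable_pi_of_isCompact hK fun _ => hKn)
    rw [show diagonalMarkov p φ μS = μS from hμSfix] at this
    rwa [Function.iterate_succ_apply']
  exact ⟨le_div_one_sub_add_pow_mul hα ha1 hε.le hstep,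
    eventually_le_two_mul_div_one_sub hα ha1 hε hstep⟩

/-- Discrete approximation of the Hutchinson measure of a GIFS with
probabilities consisting of `(a_0, ..., a_{m-1})`-contractions with
`α = Σ aᵢ < 1`: iterates of the discretized diagonal Markov operator on any
probability measure supported in a proper `ε`-net approximate the Hutchinson
measure `μ_S` with error `ε/(1−α) + αⁿ · d_MK(ν, μ_S)`, and eventually with
error `2ε/(1−α)`. -/
theorem stmt19 {X : Type*} [MetricSpace X] [CompleteSpace X]
    [MeasurableSpace X] [BorelSpace X]
    {m L : ℕ} (hm : 1 ≤ m) (hL : 0 < L)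
    (φ : Fin L → (Fin m → X) → X) (hφc : ∀ j, Continuous (φ j))
    (a : Fin m → ℝ) (ha : ∀ i, 0 ≤ a i) (ha1 : ∑ i, a i < 1)
    (hφ : ∀ j, ∀ x y : Fin m → X,
      dist (φ j x) (φ j y) ≤ ∑ i, a i * dist (x i) (y i))
    (p : Fin L → NNReal) (hp : ∀ j, 0 < p j) (hp1 : ∑ j, p j = 1)
    (μS : Measure X) [IsProbabilityMeasure μS]
    (hμSc : ∃ K : Set X, IsCompact K ∧ μS Kᶜ = 0)
    (hμSfix : (∑ j, p j • (Measure.pi fun _ : Fin m => μS).map (φ j)) = μS)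
    (ε : ℝ) (hε : 0 < ε) (Xhat : Set X)
    (hnet : ∀ x : X, ∃ y ∈ Xhat, dist x y ≤ ε)
    (hproper : ∀ D : Set X, Bornology.IsBounded D → (D ∩ Xhat).Finite)
    (r : X → X) (hrm : Measurable r)
    (hr_range : ∀ x, r x ∈ Xhat)
    (hr_id : ∀ x ∈ Xhat, r x = x)
    (hr_close : ∀ x, dist x (r x) ≤ ε)
    (ν : Measure X) [IsProbabilityMeasure ν]
    (hνc : ∃ K : Set X, IsCompact K ∧ ν Kᶜ = 0)
    (hνsupp : msupport ν ⊆ Xhat) :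
    (∀ n : ℕ,
      dMK ((fun ρ : Measure X =>
          ∑ j, p j • (Measure.pi fun _ : Fin m => ρ).map (r ∘ φ j))^[n] ν) μS
        ≤ ε / (1 - ∑ i, a i) + (∑ i, a i) ^ n * dMK ν μS) ∧
    ∀ᶠ n in atTop,
      dMK ((fun ρ : Measure X =>
          ∑ j, p j • (Measure.pi fun _ : Fin m => ρ).map (r ∘ φ j))^[n] ν) μS
        ≤ 2 * ε / (1 - ∑ i, a i) :=
  stmt19_general φ a ha ha1 hφ p hp1 μS hμSc hμSfix ε hε Xhat hproper r hrm hr_range hr_close ν hνc
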